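/- Let m be a positive integer, let C ∈ ℂ^{m×m} be the companion matrix of a monic polynomial of degree m (so C has ones on the superdiagonal, its last row is (−a_1, −a_2, …, −a_m), and all other entries are zero), and let π : ℂ^{m×m} → ℂ^m be the symmetrization map. For 1 ≤ i ≤ m, let H_i ∈ ℂ^{m×m} be the matrix whose only nonzero entry is −1 in position (m, i) (last row, column i). Then for each 1 ≤ i ≤ m, the vector π'(C)H_i ∈ ℂ^m has k-th component zero for every k < m − i + 1 and nonzero (m − i + 1)-th component; consequently the m vectors π'(C)H_1, …, π'(C)H_m are in echelon form and linearly independent, and π'(C) is surjective. -/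

import Mathlib

open Matrix Polynomial

attribute [local instance] Matrix.normedAddCommGroup Matrix.normedSpace

/-- `matSigma m j M` = σ_j(M), the coefficients defined by
det(tI − M) = Σ_{j=0}^m (−1)^j σ_j(M) t^{m−j}. -/
noncomputable def matSigma (m j : ℕ) (M : Matrix (Fin m) (Fin m) ℂ) : ℂ :=
  (-1 : ℂ) ^ j * (Matrix.charpoly M).coeff (m - j)

/-- The symmetrization map π(M) = (σ_1(M), …, σ_m(M)). -/
noncomputable def symmPi (m : ℕ) (M : Matrix (Fin m) (Fin m) ℂ) : Fin m → ℂ :=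
  fun j => matSigma m ((j : ℕ) + 1) M

/-- The companion matrix of the monic polynomial t^m + a_m t^{m−1} + ⋯ + a_2 t + a_1:
ones on the superdiagonal, last row (−a_1, −a_2, …, −a_m), zeros elsewhere
(here `a : Fin m → ℂ`, zero-based, so `a j` is a_{j+1}). -/
def companionMat (m : ℕ) (a : Fin m → ℂ) : Matrix (Fin m) (Fin m) ℂ :=
  Matrix.of fun i j =>
    if (i : ℕ) + 1 = m then -a j
    else if (j : ℕ) = (i : ℕ) + 1 then 1 else 0

/-- `Hmat m i` is the matrix whose only nonzero entry is −1 in position (m, i+1)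
(1-based: last row, column i+1), for `i : Fin m`. -/
def Hmat (m : ℕ) (i : Fin m) : Matrix (Fin m) (Fin m) ℂ :=
  Matrix.of fun r c => if (r : ℕ) + 1 = m ∧ c = i then -1 else 0

noncomputable def compPoly (m : ℕ) (a : Fin m → ℂ) : Polynomial ℂ :=
  X ^ m + ∑ j : Fin m, C (a j) * X ^ (j : ℕ)

lemma compPoly_monic (m : ℕ) (a : Fin m → ℂ) : (compPoly m a).Monic := by
  apply (monic_X_pow m).add_of_left
  rw [degree_X_pow]
  exact degree_sum_fin_lt a

lemma compPoly_natDegree (m : ℕ) (a : Fin m → ℂ) : (compPoly m a).natDegree = m := by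
  apply natDegree_eq_of_degree_eq_some
  unfold compPoly
  rw [degree_add_eq_left_of_degree_lt, degree_X_pow]
  rw [degree_X_pow]
  exact degree_sum_fin_lt a

lemma sum_coeff_lt (m : ℕ) (a : Fin m → ℂ) (n : ℕ) (hn : n < m) :
    (∑ j : Fin m, C (a j) * X ^ (j : ℕ)).coeff n = a ⟨n, hn⟩ := by
  rw [finset_sum_coeff]
  have h : ∀ j : Fin m, (C (a j) * X ^ (j : ℕ)).coeff n
      = if j = ⟨n, hn⟩ then a j else 0 := by
    intro j
    rw [coeff_C_mul, coeff_X_pow]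
    by_cases h : j = (⟨n, hn⟩ : Fin m)
    · simp [h]
    · have : n ≠ (j : ℕ) := by
        intro hc
        exact h (by apply Fin.ext; simp [hc.symm])
      simp [h, this]
  rw [Finset.sum_congr rfl fun j _ => h j, Finset.sum_ite_eq' Finset.univ]
  simp

lemma compPoly_coeff (m : ℕ) (a : Fin m → ℂ) (n : ℕ) (hn : n < m) :
    (compPoly m a).coeff n = a ⟨n, hn⟩ := by
  unfold compPoly
  rw [coeff_add, coeff_X_pow, if_neg hn.ne, zero_add, sum_coeff_lt m a n hn]

lemma charpoly_transpose' {n : Type*} [DecidableEq n] [Fintype n] (M : Matrix n n ℂ) :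
    Mᵀ.charpoly = M.charpoly := by
  rw [Matrix.charpoly, Matrix.charpoly, ← Matrix.det_transpose (charmatrix M)]
  congr 1
  ext i j
  by_cases h : i = j
  · subst h; simp
  · rw [Matrix.transpose_apply, charmatrix_apply_ne _ _ _ h,
      charmatrix_apply_ne _ _ _ (Ne.symm h), Matrix.transpose_apply]

lemma charpoly_companionMat (m : ℕ) (hm : 0 < m) (a : Fin m → ℂ) :
    (companionMat m a).charpoly = compPoly m a := by
  set p := compPoly m a with hpdef
  have hp : p.Monic := compPoly_monic m a
  have hd : p.natDegree = m := compPoly_natDegree m a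
  have hdeg : p.degree = (m : ℕ) := by
    rw [degree_eq_natDegree hp.ne_zero, hd]
  have hB := charpoly_leftMulMatrix (AdjoinRoot.powerBasis' hp)
  have hmin : minpoly ℂ (AdjoinRoot.root p) = p := by
    rw [AdjoinRoot.minpoly_root hp.ne_zero, hp.leadingCoeff, inv_one, _root_.map_one, mul_one]
  rw [AdjoinRoot.powerBasis'_gen, hmin] at hB
  have key : Algebra.leftMulMatrix (AdjoinRoot.powerBasis' hp).basis (AdjoinRoot.root p)
      = (Matrix.reindex (finCongr hd.symm) (finCongr hd.symm)) (companionMat m a)ᵀ := by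
    ext i j
    rw [Algebra.leftMulMatrix_eq_repr_mul]
    have hbj : (AdjoinRoot.powerBasis' hp).basis j = AdjoinRoot.root p ^ (j : ℕ) :=
      (AdjoinRoot.powerBasis' hp).basis_eq_pow j
    rw [hbj]
    have hroot : AdjoinRoot.root p * AdjoinRoot.root p ^ (j : ℕ)
        = AdjoinRoot.mk p (X ^ ((j : ℕ) + 1)) := by
      rw [map_pow, AdjoinRoot.mk_X, pow_succ, mul_comm]
    rw [hroot]
    have hrepr : ∀ f : AdjoinRoot p, ∀ i : Fin (AdjoinRoot.powerBasis' hp).dim,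
        (AdjoinRoot.powerBasis' hp).basis.repr f i = (AdjoinRoot.modByMonicHom hp f).coeff i := by
      intro f i
      rfl
    rw [hrepr, AdjoinRoot.modByMonicHom_mk]
    have hi : (i : ℕ) < m := by have := i.isLt; simpa [hd] using this
    have hj : (j : ℕ) < m := by have := j.isLt; simpa [hd] using this
    rw [Matrix.reindex_apply]
    show (X ^ ((j : ℕ) + 1) %ₘ p).coeff i = companionMat m a (finCongr hd.symm |>.symm j) (finCongr hd.symm |>.symm i)
    by_cases hjm : (j : ℕ) + 1 = m
    · have hps : p %ₘ p = 0 := by simpa using Polynomial.mul_self_modByMonic (p := (1 : ℂ[X])) hp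
      have hsplit : (X ^ ((j : ℕ) + 1) : ℂ[X]) = p + -(∑ l : Fin m, C (a l) * X ^ (l : ℕ)) := by
        rw [hjm, hpdef]; unfold compPoly; ring
      have hdegs : (-(∑ l : Fin m, C (a l) * X ^ (l : ℕ))).degree < p.degree := by
        rw [degree_neg, hdeg]; exact degree_sum_fin_lt a
      rw [hsplit, Polynomial.add_modByMonic, hps, zero_add,
        (modByMonic_eq_self_iff hp).mpr hdegs, coeff_neg, sum_coeff_lt m a _ hi]
      simp only [companionMat, Matrix.of_apply, finCongr_symm, finCongr_apply, Fin.coe_cast,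
        if_pos hjm]
      show -a ⟨i, hi⟩ = if (j : ℕ) + 1 = m then -a ⟨i, hi⟩ else _
      rw [if_pos hjm]
    · have hlt : ((X : ℂ[X]) ^ ((j : ℕ) + 1)).degree < p.degree := by
        rw [degree_X_pow, hdeg]
        exact_mod_cast lt_of_le_of_ne (by omega) (by exact_mod_cast hjm)
      rw [(modByMonic_eq_self_iff hp).mpr hlt, coeff_X_pow]
      simp only [companionMat, Matrix.of_apply, finCongr_symm, finCongr_apply, Fin.coe_cast]
      show (if (i : ℕ) = (j : ℕ) + 1 then (1 : ℂ) else 0) = if (j : ℕ) + 1 = m then _ else if (i : ℕ) = (j : ℕ) + 1 then 1 else 0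
      rw [if_neg hjm]
  rw [key] at hB
  calc (companionMat m a).charpoly = ((companionMat m a)ᵀ).charpoly := (charpoly_transpose' _).symm
    _ = ((Matrix.reindex (finCongr hd.symm) (finCongr hd.symm)) (companionMat m a)ᵀ).charpoly :=
        (Matrix.charpoly_reindex _ _).symm
    _ = p := hB
lemma diff_entry (m : ℕ) (i j : Fin m) :
    Differentiable ℂ (fun M : Matrix (Fin m) (Fin m) ℂ => M i j) :=
  ((ContinuousLinearMap.proj (R := ℂ) (φ := fun _ : Fin m => ℂ) j).comp
    (ContinuousLinearMap.proj (R := ℂ) (φ := fun _ : Fin m => (Fin m) → ℂ) i)).differentiable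

lemma diff_coeff_prod (m : ℕ) {ι : Type*} [DecidableEq ι] (s : Finset ι)
    (f : ι → Matrix (Fin m) (Fin m) ℂ → Polynomial ℂ)
    (hf : ∀ i n, Differentiable ℂ fun M => (f i M).coeff n) :
    ∀ n, Differentiable ℂ fun M => (∏ i ∈ s, f i M).coeff n := by
  induction s using Finset.induction_on with
  | empty => intro n; simpa using differentiable_const _
  | @insert b s hb ih =>
      intro n
      have heq : (fun M : Matrix (Fin m) (Fin m) ℂ => (∏ i ∈ insert b s, f i M).coeff n)
          = fun M => ∑ x ∈ Finset.HasAntidiagonal.antidiagonal n,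
              (f b M).coeff x.1 * (∏ i ∈ s, f i M).coeff x.2 := by
        funext M; rw [Finset.prod_insert hb, coeff_mul]
      rw [heq]
      exact Differentiable.fun_sum fun x _ => (hf b x.1).mul (ih x.2)

lemma diff_charmatrix_coeff (m : ℕ) (i j : Fin m) (c : ℕ) :
    Differentiable ℂ fun M : Matrix (Fin m) (Fin m) ℂ => ((charmatrix M) i j).coeff c := by
  have heq : (fun M : Matrix (Fin m) (Fin m) ℂ => ((charmatrix M) i j).coeff c)
      = fun M => (if i = j ∧ c = 1 then 1 else 0) - (if c = 0 then M i j else 0) := by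
    funext M
    by_cases h : i = j
    · subst h
      rw [charmatrix_apply_eq, coeff_sub, coeff_X, coeff_C]
      by_cases hc : c = 1 <;> by_cases hc0 : c = 0 <;> simp [hc, hc0] <;> omega
    · rw [charmatrix_apply_ne _ _ _ h, coeff_neg, coeff_C]
      by_cases hc0 : c = 0 <;> simp [hc0, h, sub_eq_neg_self]
  rw [heq]
  apply Differentiable.sub (differentiable_const _)
  by_cases hc0 : c = 0
  · simp only [if_pos hc0]; exact diff_entry m i j
  · simpa [hc0] using differentiable_const (0 : ℂ)

lemma diff_charpoly_coeff (m : ℕ) (n : ℕ) :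
    Differentiable ℂ fun M : Matrix (Fin m) (Fin m) ℂ => (M.charpoly).coeff n := by
  have heq : (fun M : Matrix (Fin m) (Fin m) ℂ => (M.charpoly).coeff n)
      = fun M => ∑ σ : Equiv.Perm (Fin m),
          ((Equiv.Perm.sign σ : ℤ) : ℂ) * (∏ i, charmatrix M (σ i) i).coeff n := by
    funext M
    rw [Matrix.charpoly, Matrix.det_apply, finset_sum_coeff]
    congr 1; funext σ
    rw [Polynomial.coeff_smul, Units.smul_def, zsmul_eq_mul]
  rw [heq]
  exact Differentiable.fun_sum fun σ _ =>
    ((diff_coeff_prod m Finset.univ _ (fun i c => diff_charmatrix_coeff m (σ i) i c) n).const_mul _)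

lemma diff_matSigma (m j : ℕ) : Differentiable ℂ (matSigma m j) := by
  unfold matSigma
  exact (diff_charpoly_coeff m (m - j)).const_mul _
lemma companion_add_smul (m : ℕ) (a : Fin m → ℂ) (i : Fin m) (t : ℂ) :
    companionMat m a + t • Hmat m i = companionMat m (a + t • (Pi.single i 1 : Fin m → ℂ)) := by
  ext r c
  simp only [companionMat, Hmat, Matrix.add_apply, Matrix.smul_apply, Matrix.of_apply,
    Pi.add_apply, Pi.smul_apply, Pi.single_apply, smul_eq_mul]
  by_cases h : (r : ℕ) + 1 = m
  · by_cases hc : c = i <;> simp [h, hc] <;> ring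
  · simp [h]

lemma symmPi_companion (m : ℕ) (hm : 0 < m) (b : Fin m → ℂ) (k : Fin m) :
    symmPi m (companionMat m b) k
      = (-1 : ℂ) ^ ((k : ℕ) + 1) * b ⟨m - ((k : ℕ) + 1), by omega⟩ := by
  show matSigma m ((k : ℕ) + 1) (companionMat m b) = _
  unfold matSigma
  rw [charpoly_companionMat m hm b, compPoly_coeff m b _ (by have := k.isLt; omega)]

lemma fderiv_component (m : ℕ) (hm : 0 < m) (a : Fin m → ℂ) (i k : Fin m) :
    fderiv ℂ (symmPi m) (companionMat m a) (Hmat m i) k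
      = (-1 : ℂ) ^ ((k : ℕ) + 1)
          * ((Pi.single i 1 : Fin m → ℂ) ⟨m - ((k : ℕ) + 1), by omega⟩) := by
  have hdiff : ∀ j : Fin m, DifferentiableAt ℂ
      (fun M : Matrix (Fin m) (Fin m) ℂ => matSigma m ((j : ℕ) + 1) M) (companionMat m a) :=
    fun j => (diff_matSigma m _).differentiableAt
  have hpi : fderiv ℂ (symmPi m) (companionMat m a)
      = ContinuousLinearMap.pi fun j : Fin m =>
          fderiv ℂ (fun M => matSigma m ((j : ℕ) + 1) M) (companionMat m a) :=
    fderiv_pi hdiff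
  rw [hpi, ContinuousLinearMap.pi_apply]
  refine ((hdiff k).lineDeriv_eq_fderiv (v := Hmat m i)).symm.trans ?_
  set j0 : Fin m := ⟨m - ((k : ℕ) + 1), by omega⟩ with hj0
  have hfun : (fun t : ℂ => matSigma m ((k : ℕ) + 1) (companionMat m a + t • Hmat m i))
      = fun t : ℂ => (-1 : ℂ) ^ ((k : ℕ) + 1) * (a j0 + t * (Pi.single i 1 : Fin m → ℂ) j0) := by
    funext t
    rw [companion_add_smul]
    have := symmPi_companion m hm (a + t • (Pi.single i 1 : Fin m → ℂ)) k
    rw [show symmPi m (companionMat m (a + t • (Pi.single i 1 : Fin m → ℂ))) k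
        = matSigma m ((k : ℕ) + 1) (companionMat m (a + t • (Pi.single i 1 : Fin m → ℂ))) from rfl] at this
    rw [this]
    simp [Pi.add_apply, Pi.smul_apply, smul_eq_mul]; rfl
  have hD : HasDerivAt
      (fun t : ℂ => (-1 : ℂ) ^ ((k : ℕ) + 1) * (a j0 + t * (Pi.single i 1 : Fin m → ℂ) j0))
      ((-1 : ℂ) ^ ((k : ℕ) + 1) * (1 * (Pi.single i 1 : Fin m → ℂ) j0)) 0 :=
    (((hasDerivAt_id (0 : ℂ)).mul_const _).const_add (a j0)).const_mul _
  have : lineDeriv ℂ (fun M => matSigma m ((k : ℕ) + 1) M) (companionMat m a) (Hmat m i)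
      = deriv (fun t : ℂ => matSigma m ((k : ℕ) + 1) (companionMat m a + t • Hmat m i)) 0 := rfl
  rw [this, hfun, hD.deriv, one_mul]

/-- Let C be the companion matrix of a monic polynomial of degree m and, for 1 ≤ i ≤ m,
let H_i be the matrix whose only nonzero entry is −1 in position (m, i). Then the vector
π'(C)H_i has k-th component zero for every k < m − i + 1 and nonzero (m−i+1)-th component.
(Here the zero-based `i : Fin m` denotes the 1-based index i+1, so the components with
1-based index k+1 < m − i vanish and the component with zero-based index m − i − 1,
i.e. 1-based index m − i, is nonzero.) Consequently the vectors π'(C)H_1, …, π'(C)H_m are in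
echelon form, linearly independent, and π'(C) is surjective. -/
theorem fderiv_symmPi_companion_echelon
    (m : ℕ) (hm : 0 < m) (a : Fin m → ℂ) :
    (∀ i : Fin m,
      (∀ k : Fin m, (k : ℕ) + 1 < m - (i : ℕ) →
        fderiv ℂ (symmPi m) (companionMat m a) (Hmat m i) k = 0) ∧
      fderiv ℂ (symmPi m) (companionMat m a) (Hmat m i)
        ⟨m - (i : ℕ) - 1, by have := i.isLt; omega⟩ ≠ 0) ∧
    LinearIndependent ℂ
      (fun i : Fin m => fderiv ℂ (symmPi m) (companionMat m a) (Hmat m i)) ∧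
    Function.Surjective (fderiv ℂ (symmPi m) (companionMat m a)) := by
  set v : Fin m → (Fin m → ℂ) :=
    fun i => fderiv ℂ (symmPi m) (companionMat m a) (Hmat m i) with hv
  have hzero : ∀ i k : Fin m, (k : ℕ) + 1 < m - (i : ℕ) → v i k = 0 := by
    intro i k hk
    show fderiv ℂ (symmPi m) (companionMat m a) (Hmat m i) k = 0
    rw [fderiv_component m hm a i k]
    have hne : (⟨m - ((k : ℕ) + 1), by omega⟩ : Fin m) ≠ i := by
      simp only [ne_eq, Fin.ext_iff]
      omega
    rw [Pi.single_apply, if_neg hne, mul_zero]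
  have hdiag : ∀ i : Fin m, v i ⟨m - (i : ℕ) - 1, by have := i.isLt; omega⟩ ≠ 0 := by
    intro i
    show fderiv ℂ (symmPi m) (companionMat m a) (Hmat m i)
        ⟨m - (i : ℕ) - 1, by have := i.isLt; omega⟩ ≠ 0
    rw [fderiv_component m hm a i]
    have hii : (⟨m - (((⟨m - (i : ℕ) - 1, by have := i.isLt; omega⟩ : Fin m) : ℕ) + 1),
        by omega⟩ : Fin m) = i := by
      apply Fin.ext
      simp only
      have := i.isLt
      omega
    rw [hii, Pi.single_eq_same, mul_one]
    exact pow_ne_zero _ (neg_ne_zero.mpr one_ne_zero)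
  have hli : LinearIndependent ℂ v := by
    set W : Matrix (Fin m) (Fin m) ℂ := Matrix.of fun r c => v (Fin.rev r) c with hW
    have hWrow : ∀ r : Fin m, W r = v (Fin.rev r) := fun r => rfl
    have htri : W.BlockTriangular id := by
      intro r c (hrc : (c : ℕ) < (r : ℕ))
      show v (Fin.rev r) c = 0
      apply hzero
      rw [Fin.val_rev]
      have := r.isLt
      omega
    have hdet : W.det ≠ 0 := by
      rw [Matrix.det_of_upperTriangular htri]
      apply Finset.prod_ne_zero_iff.mpr
      intro r _
      show v (Fin.rev r) r ≠ 0
      convert hdiag (Fin.rev r) using 3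
      rw [Fin.val_rev]
      have := r.isLt
      omega
    have hunit : IsUnit W := (Matrix.isUnit_iff_isUnit_det W).mpr (Ne.isUnit hdet)
    have hrows : LinearIndependent ℂ (fun r : Fin m => W r) :=
      Matrix.linearIndependent_rows_iff_isUnit.mpr hunit
    have hcomp := hrows.comp Fin.rev Fin.rev_injective
    have : (fun r : Fin m => W r) ∘ Fin.rev = v := by
      funext i
      rw [Function.comp_apply, hWrow, Fin.rev_rev]
    rwa [this] at hcomp
  refine ⟨fun i => ⟨fun k hk => hzero i k hk, hdiag i⟩, hli, ?_⟩
  intro y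
  haveI : Nonempty (Fin m) := ⟨⟨0, hm⟩⟩
  have hspan : Submodule.span ℂ (Set.range v) = ⊤ := by
    apply hli.span_eq_top_of_card_eq_finrank
    simp [Module.finrank_fintype_fun_eq_card]
  have hy : y ∈ Submodule.span ℂ (Set.range v) := hspan ▸ Submodule.mem_top
  have hle : Submodule.span ℂ (Set.range v)
      ≤ LinearMap.range (fderiv ℂ (symmPi m) (companionMat m a) :
          Matrix (Fin m) (Fin m) ℂ →ₗ[ℂ] (Fin m → ℂ)) := by
    rw [Submodule.span_le]
    rintro _ ⟨i, rfl⟩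
    exact ⟨Hmat m i, rfl⟩
  obtain ⟨x, hx⟩ := hle hy
  exact ⟨x, hx⟩
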